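/- Let n, k be positive integers and let X² be distributed as a product of n i.i.d. Gamma(k,1) variables. Then for r ≥ 1 with r^{2/n} ≥ k, P(X² > r²) ≤ exp(−n(r^{2/n} − k) + (n/2)·log(k/r^{2/n}) − n·k·log(k/r^{2/n}) + n/(12 r^{2/n})). -/

import Mathlib

/-!
By Markov's inequality applied to `(X²)^α`, with `α = r^{2/n} - k`, the tail is at most
`(Γ(k + α) / Γ k)^n / r^{2α}`. The Gamma ratio is then controlled by Binet's remainder
`log Γ z - (z - 1/2) log z + z`, which is decreasing on `[1/2, ∞)`: its unit decrements
`(z + 1/2) log (1 + 1/z) - 1` decrease, and its decrements over a fixed length tend to `0` by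
log-convexity of `Γ`. Comparing the remainder at `k` and at `r^{2/n}` already gives the bound
without the `n / (12 r^{2/n})` term that two-sided Stirling bounds would introduce.
-/

open MeasureTheory ProbabilityTheory

/-- The distribution of the product of `n` i.i.d. `Gamma(k,1)` random variables. -/
noncomputable def prodGammaMeasure (n k : ℕ) : Measure ℝ :=
  (Measure.pi fun _ : Fin n => gammaMeasure k 1).map (fun y => ∏ j, y j)

open Real Set Filter Topology
open scoped ENNReal

lemma Real.log_le_sub_inv_div_two {y : ℝ} (hy : 1 ≤ y) : log y ≤ (y - y⁻¹) / 2 := by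
  rw [← sinh_log (by positivity)]
  exact self_le_sinh_iff.2 (log_nonneg hy)

lemma Real.antitoneOn_mul_log_add_one_sub_log :
    AntitoneOn (fun z ↦ (z + 1 / 2) * (log (z + 1) - log z)) (Ioi 0) := by
  refine antitoneOn_of_hasDerivWithinAt_nonpos (convex_Ioi 0)
    (f' := fun z ↦ 1 * (log (z + 1) - log z) + (z + 1 / 2) * (1 / (z + 1) - z⁻¹)) ?_ ?_ ?_
  · intro z (hz : 0 < z)
    fun_prop (disch := positivity)
  · intro z hz
    replace hz : 0 < z := by simpa using hz
    exact (((hasDerivAt_id' z).add_const (1 / 2 : ℝ)).mul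
      ((((hasDerivAt_id' z).add_const 1).log (by positivity)).sub
        (hasDerivAt_log hz.ne'))).hasDerivWithinAt
  · intro z hz
    replace hz : 0 < z := by simpa using hz
    have hlog := log_le_sub_inv_div_two (y := (z + 1) / z) (by rw [le_div_iff₀ hz]; linarith)
    rw [log_div (by positivity) hz.ne'] at hlog
    have : ((z + 1) / z - ((z + 1) / z)⁻¹) / 2 = -((z + 1 / 2) * (1 / (z + 1) - z⁻¹)) := by
      field_simp; ring
    linarith

lemma Real.log_Gamma_add_sub_log_Gamma_le {x δ : ℝ} (hx : 0 < x) (hδ : 0 ≤ δ) :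
    log (Gamma (x + δ)) - log (Gamma x) ≤ δ * log (x + δ) := by
  rcases hδ.eq_or_lt with rfl | hδ
  · simp
  have hxδ : 0 < x + δ := by linarith
  -- slopes of the convex `log ∘ Γ` increase, and the slope on `[x + δ, x + δ + 1]` is `log (x + δ)`
  have hslope := convexOn_log_Gamma.slope_mono_adjacent (x := x) (y := x + δ) (z := x + δ + 1)
    hx (by simp; linarith) (by linarith) (by linarith)
  simp only [Function.comp_apply, Gamma_add_one hxδ.ne',
    log_mul hxδ.ne' (Gamma_pos_of_pos hxδ).ne', add_sub_cancel_left, add_sub_cancel_left,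
    add_sub_cancel_right, div_one] at hslope
  rwa [div_le_iff₀ hδ, mul_comm] at hslope

/-- Binet's function `log Γ z - ((z - 1/2) log z - z + log √(2π))`, up to the additive constant. -/
noncomputable def stirlingRemainder (z : ℝ) : ℝ := log (Gamma z) - (z - 1 / 2) * log z + z

lemma stirlingRemainder_sub_add_one {z : ℝ} (hz : 0 < z) :
    stirlingRemainder z - stirlingRemainder (z + 1) =
      (z + 1 / 2) * (log (z + 1) - log z) - 1 := by
  rw [stirlingRemainder, stirlingRemainder, Gamma_add_one hz.ne',
    log_mul hz.ne' (Gamma_pos_of_pos hz).ne']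
  ring

lemma stirlingRemainder_sub_add_ge {x δ : ℝ} (hx : 1 / 2 ≤ x) (hδ : 0 ≤ δ) :
    -(δ * (δ + 1 / 2)) / (x + δ) ≤ stirlingRemainder x - stirlingRemainder (x + δ) := by
  have hx0 : 0 < x := by linarith
  have hxδ : 0 < x + δ := by linarith
  have hchord := log_Gamma_add_sub_log_Gamma_le hx0 hδ
  have hlog : δ / (x + δ) ≤ log (x + δ) - log x := by
    have := one_sub_inv_le_log_of_pos (div_pos hxδ hx0)
    rwa [log_div hxδ.ne' hx0.ne', inv_div, one_sub_div hxδ.ne', add_sub_cancel_left] at this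
  have hmul := mul_le_mul_of_nonneg_left hlog (by linarith : 0 ≤ x - 1 / 2)
  have hid : -(δ * (δ + 1 / 2)) / (x + δ) = (x - 1 / 2) * (δ / (x + δ)) - δ := by
    field_simp; ring
  rw [hid, stirlingRemainder, stirlingRemainder]
  nlinarith

-- Telescoping over `M` unit steps compares `f z - f (z + δ)` with `f (z + M) - f (z + M + δ)`.
lemma antitoneOn_Ici_of_antitoneOn_sub_add_one {f : ℝ → ℝ} {a : ℝ}
    (hstep : AntitoneOn (fun z ↦ f z - f (z + 1)) (Ici a))
    (htail : ∀ δ, 0 ≤ δ → ∀ ε, 0 < ε → ∀ᶠ x in atTop, -ε ≤ f x - f (x + δ)) :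
    AntitoneOn f (Ici a) := by
  intro z hz w _ hzw
  obtain ⟨δ, hδ, rfl⟩ : ∃ δ, 0 ≤ δ ∧ w = z + δ := ⟨w - z, by linarith, by ring⟩
  refine le_of_forall_pos_le_add fun ε hε ↦ ?_
  obtain ⟨M, hM⟩ := ((tendsto_atTop_add_const_left atTop z
    tendsto_natCast_atTop_atTop).eventually (htail δ hδ ε hε)).exists
  have htelescope (u : ℝ) :
      f u - f (u + M) = ∑ m ∈ Finset.range M, (f (u + m) - f (u + m + 1)) := by
    have := Finset.sum_range_sub' (fun m : ℕ ↦ f (u + m)) M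
    push_cast at this
    simpa only [add_zero, CharP.cast_eq_zero, add_assoc] using this.symm
  have hsum : ∑ m ∈ Finset.range M, (f (z + δ + m) - f (z + δ + m + 1))
      ≤ ∑ m ∈ Finset.range M, (f (z + m) - f (z + m + 1)) := by
    have hm : ∀ m : ℕ, a ≤ z + m := fun m ↦ by linarith [hz.out, m.cast_nonneg (α := ℝ)]
    refine Finset.sum_le_sum fun m _ ↦ hstep ?_ ?_ (by linarith) <;> simp only [mem_Ici] <;>
      linarith [hm m]
  have hz_tel := htelescope z
  have hzδ_tel := htelescope (z + δ)
  simp only [add_right_comm z δ] at hM hsum hzδ_tel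
  linarith

lemma antitoneOn_stirlingRemainder : AntitoneOn stirlingRemainder (Ici (1 / 2)) := by
  refine antitoneOn_Ici_of_antitoneOn_sub_add_one ?_ fun δ hδ ε hε ↦ ?_
  · intro z (hz : 1 / 2 ≤ z) w (hw : 1 / 2 ≤ w) hzw
    simp only [stirlingRemainder_sub_add_one (by linarith : 0 < z),
      stirlingRemainder_sub_add_one (by linarith : 0 < w)]
    linarith [antitoneOn_mul_log_add_one_sub_log (show 0 < z by linarith)
      (show 0 < w by linarith) hzw]
  · have hlim : Tendsto (fun x ↦ -(δ * (δ + 1 / 2)) / (x + δ)) atTop (𝓝 0) :=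
      tendsto_const_nhds.div_atTop (tendsto_atTop_add_const_right _ δ tendsto_id)
    filter_upwards [hlim.eventually (Ici_mem_nhds (neg_lt_zero.2 hε)),
      eventually_ge_atTop (1 / 2)] with x hεx hx
    exact hεx.trans (stirlingRemainder_sub_add_ge hx hδ)

lemma Real.Gamma_div_Gamma_le {x y : ℝ} (hx : 1 / 2 ≤ x) (hxy : x ≤ y) :
    Gamma y / Gamma x ≤ y ^ (y - x) * exp (-(y - x) + (1 / 2 - x) * log (x / y)) := by
  have hx0 : 0 < x := by linarith
  have hy0 : 0 < y := by linarith
  have hR := antitoneOn_stirlingRemainder hx (show 1 / 2 ≤ y by linarith) hxy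
  rw [stirlingRemainder, stirlingRemainder] at hR
  rw [← exp_log (div_pos (Gamma_pos_of_pos hy0) (Gamma_pos_of_pos hx0)), rpow_def_of_pos hy0,
    ← exp_add, exp_le_exp, log_div (Gamma_pos_of_pos hy0).ne' (Gamma_pos_of_pos hx0).ne',
    log_div hx0.ne' hy0.ne']
  linarith

lemma lintegral_pi_prod_eq_pow {ι E : Type*} [Fintype ι] [MeasurableSpace E] (μ : Measure E)
    [IsProbabilityMeasure μ] {g : E → ℝ≥0∞} (hg : Measurable g) :
    ∫⁻ y, ∏ i, g (y i) ∂(Measure.pi fun _ : ι ↦ μ) = (∫⁻ x, g x ∂μ) ^ Fintype.card ι := by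
  have hindep := lintegral_prod_eq_prod_lintegral_of_indepFun Finset.univ
    (fun i (y : ι → E) ↦ g (y i)) (iIndepFun_pi (μ := fun _ : ι ↦ μ) fun _ ↦ hg.aemeasurable)
    fun i ↦ hg.comp (measurable_pi_apply i)
  rw [hindep]
  simp_rw [(measurePreserving_eval (fun _ : ι ↦ μ) _).lintegral_comp hg, Finset.prod_const,
    Finset.card_univ]

lemma lintegral_rpow_abs_gammaMeasure {a r α : ℝ} (ha : 0 < a) (hr : 0 < r) (haα : 0 < a + α) :
    ∫⁻ x, ENNReal.ofReal (|x| ^ α) ∂gammaMeasure a r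
      = ENNReal.ofReal (Gamma (a + α) / (Gamma a * r ^ α)) := by
  have hpdf : ∀ᵐ x, gammaPDF a r x * ENNReal.ofReal (|x| ^ α)
      = ENNReal.ofReal (Gamma (a + α) / (Gamma a * r ^ α)) * gammaPDF (a + α) r x := by
    have hΓa := Gamma_pos_of_pos ha
    have hΓaα := Gamma_pos_of_pos haα
    filter_upwards [Measure.ae_ne volume 0] with x hx0
    rcases hx0.lt_or_gt with hx | hx
    · simp [gammaPDF_of_neg hx]
    rw [gammaPDF_of_nonneg hx.le, gammaPDF_of_nonneg hx.le, ← ENNReal.ofReal_mul (by positivity),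
      ← ENNReal.ofReal_mul (by positivity), abs_of_pos hx, rpow_add hr,
      show a + α - 1 = a - 1 + α by ring, rpow_add hx]
    congr 1
    field_simp
  have hmeas (b : ℝ) : Measurable (gammaPDF b r) := (measurable_gammaPDFReal b r).ennreal_ofReal
  rw [gammaMeasure, lintegral_withDensity_eq_lintegral_mul₀ (hmeas a).aemeasurable (by fun_prop)]
  simp only [Pi.mul_apply]
  rw [lintegral_congr_ae hpdf, lintegral_const_mul _ (hmeas _),
    lintegral_gammaPDF_eq_one haα hr, mul_one]

lemma lintegral_rpow_abs_prodGammaMeasure (n : ℕ) {k : ℕ} (hk : 0 < k) {α : ℝ}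
    (hα : 0 < k + α) :
    ∫⁻ x, ENNReal.ofReal (|x| ^ α) ∂prodGammaMeasure n k
      = ENNReal.ofReal ((Gamma (k + α) / Gamma k) ^ n) := by
  have hk0 : (0 : ℝ) < k := by exact_mod_cast hk
  have : IsProbabilityMeasure (gammaMeasure k 1) := isProbabilityMeasure_gammaMeasure hk0 one_pos
  rw [prodGammaMeasure, lintegral_map (by fun_prop) (by fun_prop)]
  have hprod (y : Fin n → ℝ) :
      ENNReal.ofReal (|∏ j, y j| ^ α) = ∏ j, ENNReal.ofReal (|y j| ^ α) := by
    rw [Finset.abs_prod, ← finsetProd_rpow _ _ fun _ _ ↦ abs_nonneg _,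
      ENNReal.ofReal_prod_of_nonneg fun _ _ ↦ by positivity]
  simp_rw [hprod]
  rw [lintegral_pi_prod_eq_pow _ (g := fun x ↦ ENNReal.ofReal (|x| ^ α)) (by fun_prop),
    lintegral_rpow_abs_gammaMeasure hk0 one_pos hα, one_rpow, mul_one, Fintype.card_fin,
    ENNReal.ofReal_pow (div_pos (Gamma_pos_of_pos hα) (Gamma_pos_of_pos hk0)).le]

lemma prodGammaMeasure_Ioi_le (n : ℕ) {k : ℕ} (hk : 0 < k) {t α : ℝ} (ht : 0 < t) (hα : 0 ≤ α) :
    prodGammaMeasure n k (Ioi t) ≤ ENNReal.ofReal ((Gamma (k + α) / Gamma k) ^ n / t ^ α) := by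
  have htα : 0 < t ^ α := rpow_pos_of_pos ht α
  calc prodGammaMeasure n k (Ioi t)
      ≤ prodGammaMeasure n k {x | ENNReal.ofReal (t ^ α) ≤ ENNReal.ofReal (|x| ^ α)} :=
        measure_mono fun x (hx : t < x) ↦
          ENNReal.ofReal_le_ofReal (rpow_le_rpow ht.le (hx.le.trans (le_abs_self x)) hα)
    _ ≤ (∫⁻ x, ENNReal.ofReal (|x| ^ α) ∂prodGammaMeasure n k) / ENNReal.ofReal (t ^ α) :=
        meas_ge_le_lintegral_div (by fun_prop) (ENNReal.ofReal_pos.2 htα).ne'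
          ENNReal.ofReal_ne_top
    _ = _ := by
        rw [lintegral_rpow_abs_prodGammaMeasure n hk (by positivity),
          ENNReal.ofReal_div_of_pos htα]

theorem prodGamma_tail_exp_upper_bound_general {Ω : Type*} [MeasureSpace Ω]
    [IsProbabilityMeasure (ℙ : Measure Ω)]
    (n k : ℕ) (hn : 0 < n) (hk : 0 < k)
    (X : Ω → ℝ) (hXm : Measurable X)
    (hX : Measure.map (fun ω => X ω ^ 2) ℙ = prodGammaMeasure n k)
    (r : ℝ) (hr : 1 ≤ r) (hrk : (k : ℝ) ≤ r ^ ((2 : ℝ) / n)) :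
    (ℙ {ω | r ^ 2 < X ω ^ 2}).toReal ≤
      Real.exp (-(n : ℝ) * (r ^ ((2 : ℝ) / n) - (k : ℝ))
        + ((n : ℝ) / 2) * Real.log ((k : ℝ) / r ^ ((2 : ℝ) / n))
        - (n : ℝ) * (k : ℝ) * Real.log ((k : ℝ) / r ^ ((2 : ℝ) / n))
        + (n : ℝ) / (12 * r ^ ((2 : ℝ) / n))) := by
  set s := r ^ ((2 : ℝ) / n) with hs
  have hr0 : 0 < r := by linarith
  have hk1 : (1 : ℝ) ≤ k := by exact_mod_cast hk
  have hs0 : 0 < s := by linarith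
  have hrs : r ^ 2 = s ^ n := by
    rw [hs, ← rpow_mul_natCast hr0.le, div_mul_cancel₀ _ (by positivity), rpow_two]
  have hlaw : ℙ {ω | r ^ 2 < X ω ^ 2} = prodGammaMeasure n k (Ioi (r ^ 2)) := by
    rw [← hX, Measure.map_apply (by fun_prop) measurableSet_Ioi]
    rfl
  have hmarkov := prodGammaMeasure_Ioi_le n hk (t := r ^ 2) (by positivity) (sub_nonneg.2 hrk)
  rw [hlaw]
  refine ENNReal.toReal_le_of_le_ofReal (exp_nonneg _)
    (hmarkov.trans (ENNReal.ofReal_le_ofReal ?_))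
  calc (Gamma (k + (s - k)) / Gamma k) ^ n / (r ^ 2) ^ (s - k)
      = (Gamma s / Gamma k / s ^ (s - k)) ^ n := by
        rw [add_sub_cancel, hrs, ← rpow_pow_comm hs0.le, ← div_pow]
    _ ≤ exp (-(s - k) + (1 / 2 - k) * log (k / s)) ^ n := by
        gcongr
        rw [div_le_iff₀ (by positivity), mul_comm]
        exact Gamma_div_Gamma_le (by linarith) hrk
    _ ≤ _ := by
        rw [← exp_nat_mul, exp_le_exp]
        have : 0 ≤ (n : ℝ) / (12 * s) := by positivity
        linarith

/-- Upper bound on `P(X² > r²)` via Markov inequality with `α = r^{2/n} − k` and Stirling bounds. -/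
theorem prodGamma_tail_exp_upper_bound {Ω : Type*} [MeasureSpace Ω]
    [IsProbabilityMeasure (ℙ : Measure Ω)]
    (n k : ℕ) (hn : 0 < n) (hk : 0 < k)
    (X : Ω → ℝ) (hXm : Measurable X) (hX0 : ∀ ω, 0 ≤ X ω)
    (hX : Measure.map (fun ω => X ω ^ 2) ℙ = prodGammaMeasure n k)
    (r : ℝ) (hr : 1 ≤ r) (hrk : (k : ℝ) ≤ r ^ ((2 : ℝ) / n)) :
    (ℙ {ω | r ^ 2 < X ω ^ 2}).toReal ≤
      Real.exp (-(n : ℝ) * (r ^ ((2 : ℝ) / n) - (k : ℝ))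
        + ((n : ℝ) / 2) * Real.log ((k : ℝ) / r ^ ((2 : ℝ) / n))
        - (n : ℝ) * (k : ℝ) * Real.log ((k : ℝ) / r ^ ((2 : ℝ) / n))
        + (n : ℝ) / (12 * r ^ ((2 : ℝ) / n))) :=
  prodGamma_tail_exp_upper_bound_general n k hn hk X hXm hX r hr hrk
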